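/- arXiv:1510.03728 — 3 statements merged into one kernel-verified Lean document; each statement's English description precedes it below -/
import Mathlib

section
/- Let K₀ ⊆ K be number fields with K₀ totally real, and suppose every real place of K₀ ramifying in a quaternion algebra B over K₀ extends only to real places of K. If K has a unique complex place and a quaternion algebra A over K ramified at all real places of K contains a K₀-subalgebra B split at exactly one real place of K₀ with A ≅ B ⊗_{K₀} K, then [K : K₀] = 2. -/
open NumberField IsDedekindDomain Quaternion Module

noncomputable section
/-- The quaternion algebra `ℍ[K, a, b]` over a number field `K` is ramified at an
infinite place `v` if `v` is real and the base change to ℝ along `v` is a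
division algebra. -/
def RamifiedAtReal (K : Type*) [Field K] [NumberField K] (a b : K)
    (v : InfinitePlace K) : Prop :=
  ∃ hv : v.IsReal, ∀ x : ℍ[ℝ, InfinitePlace.embedding_of_isReal hv a,
      InfinitePlace.embedding_of_isReal hv b], x ≠ 0 → IsUnit x

/-- Transfer of ramification along a real place of `K` lying over a real place of `K₀`:
the two base changes to `ℝ` are literally the same quaternion algebra. -/
lemma ramifiedAtReal_comap {K₀ K : Type*} [Field K₀] [Field K] [NumberField K₀] [NumberField K]
    [Algebra K₀ K] (a b : K₀) {w : InfinitePlace K} {v : InfinitePlace K₀}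
    (hw : w.IsReal) (hv : v.IsReal) (hcomap : w.comap (algebraMap K₀ K) = v)
    (hram : RamifiedAtReal K (algebraMap K₀ K a) (algebraMap K₀ K b) w) :
    RamifiedAtReal K₀ a b v := by
  have key : ∀ x : K₀, InfinitePlace.embedding_of_isReal hv x
      = InfinitePlace.embedding_of_isReal hw (algebraMap K₀ K x) := by
    intro x
    have h1 : (InfinitePlace.embedding_of_isReal hv x : ℂ) = v.embedding x :=
      InfinitePlace.embedding_of_isReal_apply hv x
    have h2 : (InfinitePlace.embedding_of_isReal hw (algebraMap K₀ K x) : ℂ)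
        = w.embedding (algebraMap K₀ K x) :=
      InfinitePlace.embedding_of_isReal_apply hw _
    have hmk : InfinitePlace.mk (w.embedding.comp (algebraMap K₀ K))
        = InfinitePlace.mk v.embedding := by
      rw [← InfinitePlace.comap_mk, InfinitePlace.mk_embedding, hcomap,
        InfinitePlace.mk_embedding]
    rcases InfinitePlace.mk_eq_iff.mp hmk with h | h
    · have := RingHom.congr_fun h x
      simp only [RingHom.coe_comp, Function.comp_apply] at this
      rw [← Complex.ofReal_inj, h1, h2, ← this]
    · have := RingHom.congr_fun h x
      simp only [ComplexEmbedding.conjugate_coe_eq, RingHom.coe_comp,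
        Function.comp_apply] at this
      rw [← Complex.ofReal_inj, h1, h2, ← this, ← h2, Complex.conj_ofReal]
  obtain ⟨hw', H⟩ := hram
  refine ⟨hv, ?_⟩
  have ea : InfinitePlace.embedding_of_isReal hv a
      = InfinitePlace.embedding_of_isReal hw' (algebraMap K₀ K a) := key a
  have eb : InfinitePlace.embedding_of_isReal hv b
      = InfinitePlace.embedding_of_isReal hw' (algebraMap K₀ K b) := key b
  rw [ea, eb]
  exact H

/-- The arithmetic Kleinian/Fuchsian case. Suppose `K₀ ⊆ K` are number fields,
`K` has a unique complex place, `A = ℍ[K, a, b] ≅ B ⊗_{K₀} K` (with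
`B = ℍ[K₀, a, b]`) is ramified at all real places of `K`, `B` is split at
exactly one real place of `K₀` (and ramified at all its other real places), and
every real place of `K₀` ramifying in `B` extends only to real places of `K`.
Then `[K : K₀] = 2`. -/
theorem stmt_7 (K₀ K : Type*) [Field K₀] [Field K] [NumberField K₀] [NumberField K]
    [Algebra K₀ K] (a b : K₀)
    (hcomplex : Nat.card {v : InfinitePlace K // v.IsComplex} = 1)
    (hAram : ∀ v : InfinitePlace K, v.IsReal →
      RamifiedAtReal K (algebraMap K₀ K a) (algebraMap K₀ K b) v)
    (hBsplit : Nat.card {v : InfinitePlace K₀ // v.IsReal ∧ ¬ RamifiedAtReal K₀ a b v} = 1)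
    (hext : ∀ v : InfinitePlace K₀, RamifiedAtReal K₀ a b v →
      ∀ w : InfinitePlace K, w.comap (algebraMap K₀ K) = v → w.IsReal) :
    finrank K₀ K = 2 := by
  clear hext
  -- the split real place of K₀
  obtain ⟨⟨v₀, hv₀real, hv₀split⟩⟩ := (Nat.card_eq_one_iff_unique.mp hBsplit).2
  -- finiteness and algebraicity of K over K₀
  have hfin : Module.Finite K₀ K := Module.Finite.of_restrictScalars_finite ℚ K₀ K
  have halg : Algebra.IsAlgebraic K₀ K := Algebra.IsAlgebraic.of_finite K₀ K
  -- every place of K above v₀ is complex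
  have habove : ∀ w : InfinitePlace K, w.comap (algebraMap K₀ K) = v₀ → w.IsComplex := by
    intro w hw
    by_contra hc
    rw [InfinitePlace.not_isComplex_iff_isReal] at hc
    exact hv₀split (ramifiedAtReal_comap a b hc hv₀real hw (hAram w hc))
  -- the unique complex place of K
  obtain ⟨w₀, hw₀'⟩ := InfinitePlace.comap_surjective (k := K₀) (K := K) v₀
  have hw₀ : w₀.comap (algebraMap K₀ K) = v₀ := hw₀'
  have hw₀c : w₀.IsComplex := habove w₀ hw₀
  have hsub : Subsingleton {v : InfinitePlace K // v.IsComplex} :=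
    (Nat.card_eq_one_iff_unique.mp hcomplex).1
  have huniq : ∀ w : InfinitePlace K, w.IsComplex → w = w₀ := fun w hw ↦ by
    have := hsub.elim ⟨w, hw⟩ ⟨w₀, hw₀c⟩
    exact congrArg Subtype.val this
  -- identify the embeddings of K extending v₀.embedding with those defining w₀
  have hpred : ∀ τ : K →+* ℂ, τ.comp (algebraMap K₀ K) = v₀.embedding ↔
      InfinitePlace.mk τ = w₀ := by
    intro τ
    constructor
    · intro h
      have hc : (InfinitePlace.mk τ).comap (algebraMap K₀ K) = v₀ := by
        rw [InfinitePlace.comap_mk, h, InfinitePlace.mk_embedding]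
      exact huniq _ (habove _ hc)
    · intro h
      have hc : InfinitePlace.mk (τ.comp (algebraMap K₀ K)) = InfinitePlace.mk v₀.embedding := by
        rw [← InfinitePlace.comap_mk, h, InfinitePlace.mk_embedding, hw₀]
      rcases InfinitePlace.mk_eq_iff.mp hc with h' | h'
      · exact h'
      · have : ComplexEmbedding.conjugate v₀.embedding = v₀.embedding :=
          InfinitePlace.conjugate_embedding_eq_of_isReal hv₀real
        rw [← h'] at this
        calc τ.comp (algebraMap K₀ K)
            = ComplexEmbedding.conjugate (ComplexEmbedding.conjugate
              (τ.comp (algebraMap K₀ K))) := by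
              ext x; simp [ComplexEmbedding.conjugate_coe_eq]
          _ = ComplexEmbedding.conjugate (τ.comp (algebraMap K₀ K)) := by rw [this]
          _ = v₀.embedding := h'
  -- ℂ as a K₀-algebra via v₀.embedding
  letI : Algebra K₀ ℂ := v₀.embedding.toAlgebra
  have hcount : finrank K₀ K = Nat.card (K →ₐ[K₀] ℂ) := by
    rw [← Field.finSepDegree_eq_finrank_of_isSeparable K₀ K,
      Field.finSepDegree_eq_of_isAlgClosed K₀ K ℂ]
  -- K₀-algebra homs K → ℂ are exactly ring homs extending v₀.embedding
  have hequiv : (K →ₐ[K₀] ℂ) ≃ {τ : K →+* ℂ // τ.comp (algebraMap K₀ K) = v₀.embedding} :=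
    { toFun := fun f ↦ ⟨f.toRingHom, by
        ext x
        exact (f.commutes x).trans (RingHom.congr_fun (RingHom.algebraMap_toAlgebra _) x)⟩
      invFun := fun τ ↦
        { toRingHom := τ.1
          commutes' := fun x ↦ (RingHom.congr_fun τ.2 x).trans
            (RingHom.congr_fun (RingHom.algebraMap_toAlgebra _) x).symm }
      left_inv := fun f ↦ by ext x; rfl
      right_inv := fun τ ↦ by ext x; rfl }
  classical
  rw [hcount, Nat.card_congr hequiv, Nat.card_congr (Equiv.subtypeEquivRight hpred)]
  have hm : Nat.card {τ : K →+* ℂ // InfinitePlace.mk τ = w₀} = InfinitePlace.mult w₀ := by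
    rw [Nat.card_eq_fintype_card, Fintype.card_subtype]
    convert InfinitePlace.card_filter_mk_eq w₀ using 2
  rw [hm, InfinitePlace.mult, if_neg (InfinitePlace.not_isReal_iff_isComplex.mpr hw₀c)]
end
end

section
/- Let G be a finite group isomorphic to A₅ and H ≤ G a subgroup isomorphic to the dihedral group D₅ of order 10. Then for every element g ∈ G, in the action of ⟨g⟩ on G/H, at least one orbit has odd cardinality. -/
set_option maxRecDepth 10000 in
lemma no4' : ∀ a : alternatingGroup (Fin 5), a^4 = 1 → a^2 = 1 := by decide

set_option maxRecDepth 40000 in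
lemma conj2' : ∀ a b : Equiv.Perm (Fin 5), a^2 = 1 → b^2 = 1 → a ≠ 1 → b ≠ 1 →
    Equiv.Perm.sign a = 1 → Equiv.Perm.sign b = 1 →
    ∃ c : Equiv.Perm (Fin 5), Equiv.Perm.sign c = 1 ∧ c * a = b * c := by decide

/-- If `G ≅ A₅` and `H ≤ G` with `H ≅ D₅` (dihedral of order 10), then for every
`g ∈ G`, the action of the cyclic subgroup `⟨g⟩` on the left coset space `G/H`
has at least one orbit of odd cardinality. -/
theorem stmt_15 (G : Type*) [Group G]
    (hG : Nonempty (G ≃* alternatingGroup (Fin 5)))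
    (H : Subgroup G) (hH : Nonempty (H ≃* DihedralGroup 5))
    (g : G) :
    ∃ x : G ⧸ H, Odd (Nat.card (MulAction.orbit (Subgroup.zpowers g) x)) := by
  obtain ⟨e⟩ := hG
  obtain ⟨f⟩ := hH
  have hfin : Finite G := Finite.of_equiv _ e.symm.toEquiv
  have key : ∀ x : G ⧸ H, Nat.card (MulAction.orbit (Subgroup.zpowers g) x) *
      Nat.card (MulAction.stabilizer (Subgroup.zpowers g) x) = orderOf g := by
    intro x
    rw [← Nat.card_zpowers g, ← Nat.card_prod]
    exact Nat.card_congr (MulAction.orbitProdStabilizerEquivGroup _ x)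
  have hordpos : 0 < orderOf g := orderOf_pos g
  rcases Nat.even_or_odd (orderOf g) with heven | hodd
  · -- even order case
    obtain ⟨m, hm⟩ := heven
    rw [← two_mul] at hm
    have hmpos : 0 < m := by omega
    have hmlt : m < orderOf g := by omega
    -- m is odd
    have hmodd : Odd m := by
      rcases Nat.even_or_odd m with ⟨u, hu⟩ | h
      · exfalso
        rw [← two_mul] at hu
        have hupos : 0 < u := by omega
        have h4 : (e (g ^ u)) ^ 4 = 1 := by
          rw [← map_pow, ← pow_mul]
          have h44 : u * 4 = orderOf g := by omega
          rw [h44, pow_orderOf_eq_one, map_one]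
        have h2 := no4' _ h4
        rw [← map_pow, ← pow_mul] at h2
        have : g ^ (u * 2) = 1 := by
          have := congrArg e.symm h2
          simpa using this
        rw [← orderOf_dvd_iff_pow_eq_one] at this
        have := Nat.le_of_dvd (by omega) this
        omega
      · exact h
    -- h := g^m has order 2
    set h : G := g ^ m with hh
    have hsq : h ^ 2 = 1 := by
      have hm2 : m * 2 = orderOf g := by omega
      rw [hh, ← pow_mul, hm2, pow_orderOf_eq_one]
    have hne : h ≠ 1 := by
      intro hcon
      rw [hh, ← orderOf_dvd_iff_pow_eq_one] at hcon
      have := Nat.le_of_dvd hmpos hcon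
      omega
    -- H has an element of order 2
    have hcardH : Nat.card H = 10 := by
      rw [Nat.card_congr f.toEquiv]
      simp [Nat.card_eq_fintype_card, DihedralGroup.card]
    obtain ⟨k, hk⟩ := exists_prime_orderOf_dvd_card' (G := H) 2 (by rw [hcardH]; norm_num)
    have hksq : (k : G) ^ 2 = 1 := by
      have : k ^ 2 = 1 := by rw [← hk, pow_orderOf_eq_one]
      exact_mod_cast congrArg (Subtype.val) this
    have hkne : (k : G) ≠ 1 := by
      intro hcon
      have : k = 1 := Subtype.ext hcon
      rw [this] at hk
      simp at hk
    -- conjugate h to k inside G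
    have ha : (e h : Equiv.Perm (Fin 5)) ^ 2 = 1 := by
      have : e h ^ 2 = 1 := by rw [← map_pow, hsq, map_one]
      exact_mod_cast congrArg Subtype.val this
    have hb : ((e (k : G)) : Equiv.Perm (Fin 5)) ^ 2 = 1 := by
      have : e (k : G) ^ 2 = 1 := by rw [← map_pow, hksq, map_one]
      exact_mod_cast congrArg Subtype.val this
    have hane : ((e h : alternatingGroup (Fin 5)) : Equiv.Perm (Fin 5)) ≠ 1 := by
      intro hcon
      exact hne (by simpa using congrArg e.symm (OneMemClass.coe_eq_one.mp hcon))
    have hbne : ((e (k : G) : alternatingGroup (Fin 5)) : Equiv.Perm (Fin 5)) ≠ 1 := by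
      intro hcon
      exact hkne (by simpa using congrArg e.symm (OneMemClass.coe_eq_one.mp hcon))
    obtain ⟨c, hcsign, hcconj⟩ := conj2' _ _ ha hb hane hbne
      (Equiv.Perm.mem_alternatingGroup.mp (e h).2)
      (Equiv.Perm.mem_alternatingGroup.mp (e (k : G)).2)
    set C : alternatingGroup (Fin 5) := ⟨c, Equiv.Perm.mem_alternatingGroup.mpr hcsign⟩
    have hC : C * e h = e (k : G) * C := Subtype.ext hcconj
    set d : G := e.symm C with hd
    have hdconj : d * h = (k : G) * d := by
      have := congrArg e.symm hC
      simpa [hd] using this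
    -- the coset d⁻¹ H is stabilized by h
    refine ⟨QuotientGroup.mk d⁻¹, ?_⟩
    have hstab : (⟨h, pow_mem (Subgroup.mem_zpowers g) m⟩ : Subgroup.zpowers g) ∈
        MulAction.stabilizer (Subgroup.zpowers g) (QuotientGroup.mk (s := H) d⁻¹) := by
      rw [MulAction.mem_stabilizer_iff]
      show (h • (QuotientGroup.mk d⁻¹ : G ⧸ H)) = QuotientGroup.mk d⁻¹
      show (QuotientGroup.mk (h * d⁻¹) : G ⧸ H) = QuotientGroup.mk d⁻¹
      rw [QuotientGroup.eq]
      have : (h * d⁻¹)⁻¹ * d⁻¹ = (d * h * d⁻¹)⁻¹ := by group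
      rw [this, hdconj]
      simpa using H.inv_mem k.2
    -- the stabilizer has even cardinality
    set S := MulAction.stabilizer (Subgroup.zpowers g) (QuotientGroup.mk (s := H) d⁻¹)
    have hSeven : 2 ∣ Nat.card S := by
      have hdvd := Subgroup.orderOf_dvd_natCard S hstab
      rw [Subgroup.orderOf_mk] at hdvd
      rwa [orderOf_eq_prime hsq hne] at hdvd
    obtain ⟨s, hs⟩ := hSeven
    have hkey := key (QuotientGroup.mk (s := H) d⁻¹)
    rw [hs, hm] at hkey
    have hms : 2 * (Nat.card (MulAction.orbit (Subgroup.zpowers g) (QuotientGroup.mk (s := H) d⁻¹)) * s)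
        = 2 * m := by rw [← hkey]; ring
    have hms' : Nat.card (MulAction.orbit (Subgroup.zpowers g) (QuotientGroup.mk (s := H) d⁻¹)) * s
        = m := by omega
    have hoo : Odd (Nat.card (MulAction.orbit (Subgroup.zpowers g) (QuotientGroup.mk (s := H) d⁻¹)) * s) :=
      hms' ▸ hmodd
    exact (Nat.odd_mul.mp hoo).1
  · -- odd order case
    refine ⟨QuotientGroup.mk (1 : G), ?_⟩
    have hkey := key (QuotientGroup.mk (1 : G))
    rw [← hkey] at hodd
    exact (Nat.odd_mul.mp hodd).1
end

section
/- The polynomial f(t) = t⁶ − 10t⁴ + 7t³ + 15t² − 14t + 3 is irreducible over ℚ and has six distinct real roots; hence ℚ[t]/(f) is a totally real sextic number field. -/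
/-!
Modulo 7 the sextic is a product of two irreducible cubics, and modulo 2 it is the product of
`X + 1` and an irreducible quintic. A monic factor of it over `ℤ` of degree strictly between 0
and 6 would therefore have degree 3 and at the same time degree 1 or 5; Gauss's lemma carries
irreducibility over to `ℚ`. On `ℝ` the sextic changes sign between consecutive points of
`-4 < -3 < 0 < 2/5 < 1/2 < 8/5 < 5/2`, which gives six distinct real roots. These are all of its
roots, so the real sextic splits and every complex root is real.
-/

open Polynomial

theorem natDegree_eq_or_of_mul_eq_mul_irreducible {K : Type*} [Field K] {a b u v : K[X]}
    (hu : Irreducible u) (hv : Irreducible v) (ha : 0 < a.natDegree) (hb : 0 < b.natDegree)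
    (h : a * b = u * v) : a.natDegree = u.natDegree ∨ a.natDegree = v.natDegree := by
  have hau := not_isUnit_of_natDegree_pos a ha
  have hbu := not_isUnit_of_natDegree_pos b hb
  rcases hu.prime.dvd_or_dvd (h ▸ dvd_mul_right u v) with ⟨c, rfl⟩ | ⟨c, rfl⟩
  · have hv_eq : v = c * b := (mul_left_cancel₀ hu.ne_zero (by rw [← h, mul_assoc])).symm
    have hc : IsUnit c := (hv.isUnit_or_isUnit hv_eq).resolve_right hbu
    exact .inl <| natDegree_eq_of_degree_eq <|
      degree_eq_degree_of_associated (associated_mul_unit_left u c hc)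
  · have hv_eq : v = a * c := (mul_left_cancel₀ hu.ne_zero (by rw [← h, mul_left_comm])).symm
    have hc : IsUnit c := (hv.isUnit_or_isUnit hv_eq).resolve_left hau
    exact .inr <| natDegree_eq_of_degree_eq <|
      degree_eq_degree_of_associated (hv_eq ▸ (associated_mul_unit_left a c hc).symm)

theorem Polynomial.Monic.natDegree_eq_or_of_map_mul_eq_mul_irreducible {R K : Type*} [CommRing R]
    [Field K] (φ : R →+* K) {a b : R[X]} {u v : K[X]} (ha : a.Monic) (hb : b.Monic)
    (ha0 : 0 < a.natDegree) (hb0 : 0 < b.natDegree) (hu : Irreducible u) (hv : Irreducible v)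
    (h : (a * b).map φ = u * v) : a.natDegree = u.natDegree ∨ a.natDegree = v.natDegree := by
  rw [Polynomial.map_mul] at h
  rw [← ha.natDegree_map φ]
  exact natDegree_eq_or_of_mul_eq_mul_irreducible hu hv (by rwa [ha.natDegree_map])
    (by rwa [hb.natDegree_map]) h

theorem eq_X_sq_add_X_add_one_of_forall_not_isRoot {d : (ZMod 2)[X]} (hd : d.Monic)
    (h2 : d.natDegree = 2) (hroot : ∀ x, ¬ d.IsRoot x) : d = X ^ 2 + X + 1 := by
  have hd_eq : d = X ^ 2 + C (d.coeff 1) * X + C (d.coeff 0) := by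
    conv_lhs => rw [hd.as_sum, h2]
    simp only [Finset.sum_range_succ, Finset.range_one, Finset.sum_singleton, pow_zero, mul_one,
      pow_one]
    ring
  have h0 := hroot 0
  have h1 := hroot 1
  rw [hd_eq] at h0 h1
  simp only [IsRoot.def, eval_add, eval_pow, eval_X, eval_mul, eval_C, ne_eq,
    OfNat.ofNat_ne_zero, not_false_eq_true, zero_pow, mul_zero, add_zero, zero_add, one_pow,
    mul_one] at h0 h1
  have hcoeff : ∀ a b : ZMod 2, b ≠ 0 → 1 + a + b ≠ 0 → a = 1 ∧ b = 1 := by decide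
  obtain ⟨ha, hb⟩ := hcoeff _ _ h0 h1
  rw [hd_eq, ha, hb, C_1, one_mul]

theorem exists_isRoot_mem_Ioo_of_eval_mul_eval_neg {p : ℝ[X]} {a b : ℝ} (hab : a ≤ b)
    (h : p.eval a * p.eval b < 0) : ∃ r ∈ Set.Ioo a b, p.IsRoot r := by
  rcases mul_neg_iff.mp h with ⟨ha, hb⟩ | ⟨ha, hb⟩
  · exact intermediate_value_Ioo' hab p.continuousOn ⟨hb, ha⟩
  · exact intermediate_value_Ioo hab p.continuousOn ⟨ha, hb⟩

theorem le_card_roots_toFinset_of_sign_changes {p : ℝ[X]} {n : ℕ} {x : Fin (n + 1) → ℝ}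
    (hx : StrictMono x) (hsign : ∀ i : Fin n, p.eval (x i.castSucc) * p.eval (x i.succ) < 0) :
    n ≤ p.roots.toFinset.card := by
  choose r hr hroot using fun i =>
    exists_isRoot_mem_Ioo_of_eval_mul_eval_neg (hx.monotone (Fin.castSucc_le_succ i)) (hsign i)
  have hr_mono : StrictMono r := fun i j hij =>
    calc r i < x i.succ := (hr i).2
      _ ≤ x j.castSucc := hx.monotone (Fin.succ_le_castSucc_iff.mpr hij)
      _ < r j := (hr j).1
  calc n = (Finset.univ.image r).card := by
        rw [Finset.card_image_of_injective _ hr_mono.injective, Finset.card_fin]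
    _ ≤ p.roots.toFinset.card := Finset.card_le_card fun y hy => by
        obtain ⟨i, -, rfl⟩ := Finset.mem_image.mp hy
        have hp : p ≠ 0 := by rintro rfl; simpa using hsign i
        exact Multiset.mem_toFinset.mpr ((mem_roots hp).mpr (hroot i))

theorem Polynomial.Splits.im_eq_zero_of_aeval_eq_zero {p : ℝ[X]} (hsplit : p.Splits) (hp : p ≠ 0)
    {z : ℂ} (hz : aeval z p = 0) : z.im = 0 := by
  obtain ⟨r, rfl⟩ := hsplit.mem_range_of_isRoot hp (i := algebraMap ℝ ℂ)
    (by rwa [IsRoot, eval_map_algebraMap])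
  exact Complex.ofReal_im r

instance : Fact (Nat.Prime 7) := ⟨by norm_num⟩

theorem irreducible_cubics_zmod_seven :
    Irreducible (X ^ 3 + 2 * X ^ 2 + 4 * X + 2 : (ZMod 7)[X]) ∧
      Irreducible (X ^ 3 + 5 * X ^ 2 + 4 * X + 5 : (ZMod 7)[X]) := by
  have hdeg₁ : (X ^ 3 + 2 * X ^ 2 + 4 * X + 2 : (ZMod 7)[X]).natDegree = 3 := by compute_degree!
  have hdeg₂ : (X ^ 3 + 5 * X ^ 2 + 4 * X + 5 : (ZMod 7)[X]).natDegree = 3 := by compute_degree!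
  constructor <;> refine irreducible_of_degree_le_three_of_not_isRoot (by simp [hdeg₁, hdeg₂]) ?_ <;>
    simp only [IsRoot, eval_add, eval_mul, eval_pow, eval_X, eval_ofNat] <;> decide

theorem irreducible_quintic_zmod_two :
    Irreducible (X ^ 5 + X ^ 4 + X ^ 3 + X + 1 : (ZMod 2)[X]) := by
  set q : (ZMod 2)[X] := X ^ 5 + X ^ 4 + X ^ 3 + X + 1 with hq_def
  have hq : q.Monic := by rw [hq_def]; monicity!
  have hdeg : q.natDegree = 5 := by rw [hq_def]; compute_degree!
  have hroot : ∀ x, ¬ q.IsRoot x := by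
    simp only [q, IsRoot, eval_add, eval_pow, eval_X, eval_one]
    decide
  rw [hq.irreducible_iff_lt_natDegree_lt (by rintro h; simp [h] at hdeg)]
  intro d hd hd_deg hdvd
  have hd_root : ∀ x, ¬ d.IsRoot x := fun x hx => hroot x (hx.dvd hdvd)
  rw [hdeg, Finset.mem_Ioc] at hd_deg
  obtain hd1 | hd2 : d.natDegree = 1 ∨ d.natDegree = 2 := by omega
  · obtain ⟨x, hx⟩ :=
      exists_root_of_degree_eq_one ((degree_eq_iff_natDegree_eq_of_pos one_pos).mpr hd1)
    exact hd_root x hx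
  · have hdiv : q = (X ^ 2 + X + 1) * X ^ 3 + (X + 1) := by ring
    rw [hdiv, ← eq_X_sq_add_X_add_one_of_forall_not_isRoot hd hd2 hd_root,
      dvd_add_right (dvd_mul_right _ _)] at hdvd
    exact not_dvd_of_natDegree_lt (X_add_C_ne_zero 1) (by rw [hd2]; compute_degree!) hdvd

noncomputable def sextic (R : Type*) [Ring R] : R[X] :=
  X ^ 6 - 10 * X ^ 4 + 7 * X ^ 3 + 15 * X ^ 2 - 14 * X + 3

theorem map_sextic {R S : Type*} [Ring R] [Ring S] (φ : R →+* S) :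
    (sextic R).map φ = sextic S := by
  simp [sextic]

theorem monic_sextic (R : Type*) [Ring R] [Nontrivial R] : (sextic R).Monic := by
  unfold sextic; monicity!

theorem natDegree_sextic (R : Type*) [Ring R] [Nontrivial R] : (sextic R).natDegree = 6 := by
  unfold sextic; compute_degree!

theorem sextic_zmod_seven :
    sextic (ZMod 7) = (X ^ 3 + 2 * X ^ 2 + 4 * X + 2) * (X ^ 3 + 5 * X ^ 2 + 4 * X + 5) := by
  have h7 : (7 : (ZMod 7)[X]) = 0 := by exact_mod_cast CharP.cast_eq_zero (ZMod 7)[X] 7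
  unfold sextic
  linear_combination (-(X ^ 5 + 4 * X ^ 4 + 4 * X ^ 3 + 3 * X ^ 2 + 6 * X + 1) : (ZMod 7)[X]) * h7

theorem sextic_zmod_two : sextic (ZMod 2) = (X + 1) * (X ^ 5 + X ^ 4 + X ^ 3 + X + 1) := by
  have h2 : (2 : (ZMod 2)[X]) = 0 := by exact_mod_cast CharP.cast_eq_zero (ZMod 2)[X] 2
  unfold sextic
  linear_combination (-X ^ 5 - 6 * X ^ 4 + 3 * X ^ 3 + 7 * X ^ 2 - 8 * X + 1 : (ZMod 2)[X]) * h2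

theorem irreducible_sextic_int : Irreducible (sextic ℤ) := by
  refine (monic_sextic ℤ).irreducible_iff_natDegree.mpr
    ⟨fun h => by simpa [h] using natDegree_sextic ℤ, fun a b ha hb hab => ?_⟩
  by_contra! hpos
  have hdeg7 := ha.natDegree_eq_or_of_map_mul_eq_mul_irreducible (Int.castRingHom (ZMod 7)) hb
    (by omega) (by omega) irreducible_cubics_zmod_seven.1 irreducible_cubics_zmod_seven.2
    (by rw [hab, map_sextic, sextic_zmod_seven])
  have hdeg2 := ha.natDegree_eq_or_of_map_mul_eq_mul_irreducible (Int.castRingHom (ZMod 2)) hb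
    (by omega) (by omega) (irreducible_of_degree_eq_one (degree_X_add_C 1))
    irreducible_quintic_zmod_two (by rw [hab, map_sextic, sextic_zmod_two, C_1])
  have hc₁ : (X ^ 3 + 2 * X ^ 2 + 4 * X + 2 : (ZMod 7)[X]).natDegree = 3 := by compute_degree!
  have hc₂ : (X ^ 3 + 5 * X ^ 2 + 4 * X + 5 : (ZMod 7)[X]).natDegree = 3 := by compute_degree!
  have hq : (X ^ 5 + X ^ 4 + X ^ 3 + X + 1 : (ZMod 2)[X]).natDegree = 5 := by compute_degree!
  rw [hc₁, hc₂] at hdeg7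
  rw [natDegree_X_add_C, hq] at hdeg2
  omega

theorem irreducible_sextic_rat : Irreducible (sextic ℚ) := by
  rw [← map_sextic (algebraMap ℤ ℚ)]
  exact (monic_sextic ℤ).irreducible_iff_irreducible_map_fraction_map.mp irreducible_sextic_int

theorem card_roots_toFinset_sextic_real : (sextic ℝ).roots.toFinset.card = 6 := by
  refine le_antisymm ?_ ?_
  · exact (Multiset.toFinset_card_le _).trans ((card_roots' _).trans (natDegree_sextic ℝ).le)
  · refine le_card_roots_toFinset_of_sign_changes (x := ![-4, -3, 0, 2 / 5, 1 / 2, 8 / 5, 5 / 2])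
      (Fin.strictMono_iff_lt_succ.2 fun i => ?_) fun i => ?_
    · fin_cases i <;> simp <;> norm_num
    · fin_cases i <;> simp [sextic] <;> norm_num

theorem splits_sextic_real : (sextic ℝ).Splits := by
  refine splits_iff_card_roots.mpr (le_antisymm (card_roots' _) ?_)
  rw [natDegree_sextic, ← card_roots_toFinset_sextic_real]
  exact Multiset.toFinset_card_le _

/-- The polynomial `f(t) = t⁶ − 10t⁴ + 7t³ + 15t² − 14t + 3` is irreducible over ℚ
and has six distinct real roots; hence every complex root of `f` is real, so that
`ℚ[t]/(f)` is a totally real sextic number field. -/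
theorem stmt_17 :
    let f : ℚ[X] := X ^ 6 - 10 * X ^ 4 + 7 * X ^ 3 + 15 * X ^ 2 - 14 * X + 3
    Irreducible f ∧
    ((f.map (algebraMap ℚ ℝ)).roots.toFinset.card = 6) ∧
    (∀ z : ℂ, Polynomial.aeval z f = 0 → z.im = 0) := by
  intro f
  have hf : f = sextic ℚ := rfl
  have hf_real : f.map (algebraMap ℚ ℝ) = sextic ℝ := by rw [hf, map_sextic]
  refine ⟨irreducible_sextic_rat, hf_real ▸ card_roots_toFinset_sextic_real, fun z hz => ?_⟩
  rw [← aeval_map_algebraMap ℝ, hf_real] at hz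
  exact splits_sextic_real.im_eq_zero_of_aeval_eq_zero (monic_sextic ℝ).ne_zero hz
end
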